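/- For q, q~ binary forms of degree k, the pairing (q, q~) factorizes on products of linear forms: if q = prod_{i=1}^{k} (a_i v - b_i u) and q~ = (a v - b u)^k, then (q, q~) = prod_{i=1}^{k} (a_i b - b_i a). -/

import Mathlib

open Polynomial Finset

/-!
Pairing with the `k`-th power of the linear form `a₀ v - b₀ u` cancels the binomial weights and
the signs, so it evaluates the degree-`k` homogenization of `q` at `(v, u) = (b₀, a₀)`.
Homogenization is multiplicative, so on a product of linear forms this evaluation is the
product of the values `aᵢ b₀ - bᵢ a₀`.
-/

/-- The bilinear pairing on binary forms of degree `k`, where a form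
`q(u,v) = ∑ c_i u^(k-i) v^i` is encoded as the polynomial `∑ c_i X^i` (i.e. `u = 1`,
`X = v`):  `(q, q~) = ∑_{i=0}^k (-1)^i c_i d_{k-i} / binom(k,i)`. -/
noncomputable def bform (k : ℕ) (q r : Polynomial ℂ) : ℂ :=
  ∑ i ∈ Finset.range (k + 1), (-1) ^ i * q.coeff i * r.coeff (k - i) / (k.choose i : ℂ)

lemma coeff_C_mul_X_sub_C_pow {R : Type*} [CommRing R] (a b : R) {k j : ℕ} (h : j ≤ k) :
    ((C a * X - C b) ^ k).coeff j = k.choose j * a ^ j * (-b) ^ (k - j) := by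
  have hterm : ∀ m, (C a * X) ^ m * C (-b) ^ (k - m) * (k.choose m : R[X]) =
      C (k.choose m * a ^ m * (-b) ^ (k - m)) * X ^ m := fun m => by
    simp only [C_mul, C_pow, map_natCast]; ring
  rw [sub_eq_add_neg, ← C_neg, add_pow, finsetSum_coeff]
  simp_rw [hterm, coeff_C_mul_X_pow]
  simp [Nat.lt_succ_iff.mpr h]

lemma eval_homogenize_eq_sum {R : Type*} [CommSemiring R] (p : R[X]) (n : ℕ) (x : Fin 2 → R) :
    MvPolynomial.eval x (p.homogenize n) =
      ∑ i ∈ range (n + 1), p.coeff i * x 0 ^ i * x 1 ^ (n - i) := by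
  simp [homogenize, MvPolynomial.eval_monomial, Nat.sum_antidiagonal_eq_sum_range_succ_mk,
    mul_assoc]

lemma bform_C_mul_X_sub_C_pow (k : ℕ) (q : ℂ[X]) (a₀ b₀ : ℂ) :
    bform k q ((C a₀ * X - C b₀) ^ k) = MvPolynomial.eval ![b₀, a₀] (q.homogenize k) := by
  rw [bform, eval_homogenize_eq_sum]
  refine sum_congr rfl fun i hi => ?_
  have hik : i ≤ k := Nat.lt_succ_iff.mp (mem_range.mp hi)
  have hchoose : (k.choose i : ℂ) ≠ 0 := Nat.cast_ne_zero.mpr (Nat.choose_pos hik).ne'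
  rw [coeff_C_mul_X_sub_C_pow _ _ (Nat.sub_le k i), Nat.choose_symm hik, Nat.sub_sub_self hik]
  have hsign : (-1 : ℂ) ^ i * (-b₀) ^ i = b₀ ^ i := by rw [← mul_pow]; simp
  rw [Matrix.cons_val_zero, Matrix.cons_val_one, Matrix.cons_val_fin_one, div_eq_iff hchoose]
  linear_combination (q.coeff i * (k.choose i : ℂ) * a₀ ^ (k - i)) * hsign

/-- factorization of the pairing on products of linear forms: if
`q = ∏_{i=1}^k (aᵢ v - bᵢ u)` and `q~ = (a v - b u)^k` (linear forms `a v - b u` being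
encoded as polynomials `a X - b`), then `(q, q~) = ∏_{i=1}^k (aᵢ b - bᵢ a)`. -/
theorem bform_factorization (k : ℕ) (a b : Fin k → ℂ) (a₀ b₀ : ℂ) :
    bform k (∏ i, (Polynomial.C (a i) * Polynomial.X - Polynomial.C (b i)))
        ((Polynomial.C a₀ * Polynomial.X - Polynomial.C b₀) ^ k)
      = ∏ i, (a i * b₀ - b i * a₀) := by
  have hprod : (∏ i, (C (a i) * X - C (b i))).homogenize k =
      ∏ i, (C (a i) * X - C (b i)).homogenize 1 := by
    have hdeg : ∀ i ∈ univ, (C (a i) * X - C (b i)).natDegree ≤ 1 := fun i _ => by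
      rw [sub_eq_add_neg, ← C_neg]
      exact natDegree_linear_le
    have := homogenize_finsetProd hdeg
    rwa [sum_const, card_univ, Fintype.card_fin, smul_eq_mul, mul_one] at this
  rw [bform_C_mul_X_sub_C_pow, hprod, map_prod]
  simp
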